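/- arXiv:1805.03265 — 5 statements merged into one kernel-verified Lean document; each statement's English description precedes it below -/
import Mathlib

section
/- Let w > 1 be a real number and let b ≥ 1 be a natural number. Let p be the unique positive integer with 2^{p−1} ≤ w < 2^p and set x̂₀ = 2^{−p}. Define recursively x̂_i = trunc_b(−w·x̂_{i−1}² + 2·x̂_{i−1}) for i ≥ 1, and let s = ⌈log₂ b⌉. Then |x̂_s − 1/w| ≤ (2 + log₂ b)/2^b. -/
/-!
The Newton map `N x = -w x² + 2x` satisfies `1/w - N x = w (1/w - x)²`, so it maps `[0, 1/w]`
into itself and squares the relative error, while truncation adds less than `2⁻ᵇ` per step.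
Starting with relative error at most `1/2`, the error after `i` steps is therefore at most
`2^(-2^i)/w + i/2^b`; after `s = ⌈log₂ b⌉` steps the first term is at most `2⁻ᵇ` since `w ≥ 1`.
-/

/-- Truncation of a real number to `b` bits after the binary point:
`trunc b y = ⌊2^b * y⌋ / 2^b`. -/
noncomputable def trunc (b : ℕ) (y : ℝ) : ℝ := (⌊(2:ℝ)^b * y⌋ : ℝ) / 2^b

open Real Set

lemma trunc_le (b : ℕ) (y : ℝ) : trunc b y ≤ y := by
  rw [trunc, div_le_iff₀ (by positivity), mul_comm y]
  exact Int.floor_le _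

lemma lt_trunc_add (b : ℕ) (y : ℝ) : y < trunc b y + 1 / 2^b := by
  rw [trunc, ← add_div, lt_div_iff₀ (by positivity), mul_comm]
  exact Int.lt_floor_add_one _

lemma trunc_nonneg (b : ℕ) {y : ℝ} (hy : 0 ≤ y) : 0 ≤ trunc b y :=
  div_nonneg (mod_cast Int.floor_nonneg.mpr (by positivity)) (by positivity)

lemma inv_sub_newton {w : ℝ} (hw : w ≠ 0) (x : ℝ) :
    1/w - (-w * x^2 + 2 * x) = w * (1/w - x)^2 := by
  field_simp
  ring

lemma trunc_newton_bounds {w x : ℝ} (hw : 0 < w) (b : ℕ) (hx0 : 0 ≤ x) (hxw : x ≤ 1/w) :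
    0 ≤ trunc b (-w * x^2 + 2 * x) ∧ trunc b (-w * x^2 + 2 * x) ≤ 1/w ∧
      1/w - trunc b (-w * x^2 + 2 * x) < w * (1/w - x)^2 + 1/2^b := by
  have hwx : w * x ≤ 1 := by rwa [le_div_iff₀ hw, mul_comm] at hxw
  have hid := inv_sub_newton hw.ne' x
  refine ⟨trunc_nonneg b (by nlinarith), ?_, ?_⟩
  · linarith [trunc_le b (-w * x^2 + 2 * x), mul_nonneg hw.le (sq_nonneg (1/w - x))]
  · linarith [lt_trunc_add b (-w * x^2 + 2 * x)]

lemma two_mul_succ_le_two_pow_two_pow (n : ℕ) : 2 * (n + 1) ≤ 2 ^ 2 ^ n :=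
  calc 2 * (n + 1) ≤ 2 ^ (n + 1) := by
        rw [pow_succ, mul_comm]
        exact Nat.mul_le_mul_right 2 Nat.lt_two_pow_self
    _ ≤ 2 ^ 2 ^ n := Nat.pow_le_pow_right two_pos Nat.lt_two_pow_self

lemma newton_error_bound_succ {w D n E e e' : ℝ} (hw : 0 < w) (hD : 0 < D) (hn : 0 ≤ n)
    (hE : 2 * (n + 1) ≤ E) (he0 : 0 ≤ e) (he : e ≤ 1/(E * w) + n/D) (he'w : e' ≤ 1/w)
    (he' : e' ≤ w * e^2 + 1/D) :
    e' ≤ 1/(E^2 * w) + (n + 1)/D := by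
  have hE0 : 0 < E := by linarith
  rcases le_or_gt (1/w) ((n + 1)/D) with hwD | hwD
  · have : 0 ≤ 1/(E^2 * w) := by positivity
    linarith
  -- Now `w (n + 1) < D`, which keeps the cross term of `(1/(E w) + n/D)²` below `n/D`.
  have hsmall : 2/E + w * n/D ≤ 1 := by
    rw [div_lt_div_iff₀ hD hw] at hwD
    rw [div_add_div _ _ hE0.ne' hD.ne', div_le_one (by positivity)]
    nlinarith
  have hsq : w * e^2 ≤ w * (1/(E * w) + n/D)^2 := by gcongr
  have hexp : w * (1/(E * w) + n/D)^2 = 1/(E^2 * w) + n/D * (2/E + w * n/D) := by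
    field_simp
    ring
  have hcross : n/D * (2/E + w * n/D) ≤ n/D := mul_le_of_le_one_right (by positivity) hsmall
  rw [add_div, ← add_assoc]
  linarith

theorem trunc_newton_iterate_bounds {w : ℝ} (hw : 0 < w) (b : ℕ) {x : ℕ → ℝ}
    (hx0 : x 0 ∈ Icc (1/(2 * w)) (1/w))
    (hx : ∀ i, x (i + 1) = trunc b (-w * (x i)^2 + 2 * x i)) (i : ℕ) :
    0 ≤ x i ∧ x i ≤ 1/w ∧ 1/w - x i ≤ 1/(2^2^i * w) + i/2^b := by
  induction i with
  | zero =>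
    have hhalf : 1/w - 1/(2 * w) = 1/(2 * w) := by field_simp; ring
    refine ⟨le_trans (by positivity) hx0.1, hx0.2, ?_⟩
    simp only [pow_zero, pow_one, Nat.cast_zero, zero_div, add_zero]
    linarith [hx0.1]
  | succ i ih =>
    obtain ⟨hxi0, hxiw, hei⟩ := ih
    obtain ⟨h0, hw', he⟩ := trunc_newton_bounds hw b hxi0 hxiw
    rw [hx i]
    refine ⟨h0, hw', ?_⟩
    have hpow : (2:ℝ)^2^(i + 1) = (2^2^i)^2 := by rw [pow_succ, pow_mul]
    rw [hpow]
    push_cast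
    exact newton_error_bound_succ hw (by positivity) i.cast_nonneg
      (mod_cast two_mul_succ_le_two_pow_two_pow i) (by linarith) hei (by linarith) he.le

lemma two_zpow_neg_mem_Icc {w : ℝ} {p : ℕ} (hp1 : (2:ℝ)^(p - 1) ≤ w) (hp2 : w < 2^p) :
    (2:ℝ)^(-(p:ℤ)) ∈ Icc (1/(2 * w)) (1/w) := by
  have hp : p ≠ 0 := by
    rintro rfl
    norm_num at hp1 hp2
    linarith
  have hw : 0 < w := lt_of_lt_of_le (by positivity) hp1
  have h2p : (2:ℝ)^p ≤ 2 * w := by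
    rw [← Nat.sub_one_add_one hp, pow_succ']
    gcongr
  rw [zpow_neg, zpow_natCast, ← one_div]
  exact ⟨one_div_le_one_div_of_le (by positivity) h2p, one_div_le_one_div_of_le hw hp2.le⟩

lemma le_two_pow_ceil_logb (b : ℕ) : b ≤ 2 ^ ⌈logb 2 b⌉₊ := by
  have : ⌈logb 2 b⌉₊ = Nat.clog 2 b := by exact_mod_cast natCeil_logb_natCast 2 b
  rw [this]
  exact Nat.le_pow_clog one_lt_two b

theorem stmt0_general (w : ℝ) (b : ℕ)
    (p : ℕ) (hp1 : (2:ℝ)^(p-1) ≤ w) (hp2 : w < 2^p)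
    (xhat : ℕ → ℝ) (hx0 : xhat 0 = (2:ℝ)^(-(p:ℤ)))
    (hxrec : ∀ i : ℕ, xhat (i+1) = trunc b (-w * (xhat i)^2 + 2 * xhat i)) :
    |xhat ⌈Real.logb 2 b⌉₊ - 1/w| ≤ (2 + Real.logb 2 b) / 2^b := by
  set s := ⌈logb 2 b⌉₊
  have hw1 : 1 ≤ w := le_trans (one_le_pow₀ one_le_two) hp1
  obtain ⟨-, hxs, herr⟩ := trunc_newton_iterate_bounds (by positivity) b
    (hx0 ▸ two_zpow_neg_mem_Icc hp1 hp2) hxrec s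
  have hlog : 0 ≤ logb 2 b := div_nonneg (log_natCast_nonneg b) (log_nonneg one_le_two)
  have hs : (s:ℝ) ≤ logb 2 b + 1 := (Nat.ceil_lt_add_one hlog).le
  have hquad : 1/(2^2^s * w) ≤ 1/(2:ℝ)^b := by
    apply one_div_le_one_div_of_le (by positivity)
    calc (2:ℝ)^b ≤ 2^2^s := pow_le_pow_right₀ one_le_two (le_two_pow_ceil_logb b)
      _ ≤ 2^2^s * w := le_mul_of_one_le_right (by positivity) hw1
  rw [abs_sub_comm, abs_of_nonneg (by linarith)]
  calc 1/w - xhat s ≤ 1/(2^2^s * w) + s/2^b := herr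
    _ ≤ 1/2^b + (logb 2 b + 1)/2^b := by gcongr
    _ = (2 + logb 2 b)/2^b := by ring

/-- Error analysis of Algorithm INV: Newton's iteration for the reciprocal `1/w`,
with each intermediate result truncated to `b` fractional bits. -/
theorem stmt0 (w : ℝ) (hw : 1 < w) (b : ℕ) (hb : 1 ≤ b)
    (p : ℕ) (hp : 1 ≤ p) (hp1 : (2:ℝ)^(p-1) ≤ w) (hp2 : w < 2^p)
    (xhat : ℕ → ℝ) (hx0 : xhat 0 = (2:ℝ)^(-(p:ℤ)))
    (hxrec : ∀ i : ℕ, xhat (i+1) = trunc b (-w * (xhat i)^2 + 2 * xhat i)) :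
    |xhat ⌈Real.logb 2 b⌉₊ - 1/w| ≤ (2 + Real.logb 2 b) / 2^b :=
  stmt0_general w b p hp1 hp2 xhat hx0 hxrec
end

section
/- Let m ≥ 1 and b ≥ max{2m, 4} be natural numbers and set ε = (3/4)^{b−2m}·(2 + b + log₂ b). Let w ≥ 1 be real, let k ≥ 1, and let ẑ₀ = w and ẑ₁,…,ẑ_k be real numbers such that for every i ∈ {1,…,k}: ẑ_i ≥ 1 and |ẑ_i − √(ẑ_{i−1})| ≤ ε. Then for every i ∈ {1,…,k}: |ẑ_i − w^{1/2^i}| ≤ 2ε = 2·(3/4)^{b−2m}·(2 + b + log₂ b). -/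
lemma sqrt_diff_half (a c : ℝ) (ha : 1 ≤ a) (hc : 1 ≤ c) :
    |Real.sqrt a - Real.sqrt c| ≤ |a - c| / 2 := by
  have ha' : (1:ℝ) ≤ Real.sqrt a := by
    rw [show (1:ℝ) = Real.sqrt 1 by simp]; exact Real.sqrt_le_sqrt ha
  have hc' : (1:ℝ) ≤ Real.sqrt c := by
    rw [show (1:ℝ) = Real.sqrt 1 by simp]; exact Real.sqrt_le_sqrt hc
  have hqa : Real.sqrt a ^ 2 = a := Real.sq_sqrt (by linarith)
  have hqc : Real.sqrt c ^ 2 = c := Real.sq_sqrt (by linarith)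
  rcases abs_cases (Real.sqrt a - Real.sqrt c) with ⟨h1, h2⟩ | ⟨h1, h2⟩ <;>
  rcases abs_cases (a - c) with ⟨g1, g2⟩ | ⟨g1, g2⟩ <;>
  rw [h1, g1] <;> nlinarith

/-- Error analysis of Algorithm PowerOf2Roots: `k` successive square roots, each computed
with error at most `ε = (3/4)^(b-2m) * (2 + b + log₂ b)`, yield approximations of the
roots `w^(1/2^i)` with error at most `2ε`. -/
theorem stmt2 (m b : ℕ) (hm : 1 ≤ m) (hb : max (2*m) 4 ≤ b)
    (w : ℝ) (hw : 1 ≤ w) (k : ℕ) (hk : 1 ≤ k)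
    (zhat : ℕ → ℝ) (h0 : zhat 0 = w)
    (hstep : ∀ i : ℕ, 1 ≤ i → i ≤ k →
      1 ≤ zhat i ∧
      |zhat i - Real.sqrt (zhat (i-1))| ≤
        (3/4 : ℝ)^(b - 2*m) * (2 + (b:ℝ) + Real.logb 2 b)) :
    ∀ i : ℕ, 1 ≤ i → i ≤ k →
      |zhat i - w ^ ((1:ℝ)/2^i)| ≤
        2 * ((3/4 : ℝ)^(b - 2*m) * (2 + (b:ℝ) + Real.logb 2 b)) := by
  set ε : ℝ := (3/4 : ℝ)^(b - 2*m) * (2 + (b:ℝ) + Real.logb 2 b) with hεdef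
  have hb4 : (4:ℕ) ≤ b := le_trans (le_max_right _ _) hb
  have hε : 0 ≤ ε := by
    apply mul_nonneg (by positivity)
    have : 0 ≤ Real.logb 2 b := Real.logb_nonneg one_lt_two (by exact_mod_cast Nat.one_le_iff_ne_zero.mpr (by omega))
    have hb' : (4:ℝ) ≤ (b:ℝ) := by exact_mod_cast hb4
    linarith
  have hw0 : 0 ≤ w := by linarith
  have hwpow : ∀ j : ℕ, 1 ≤ w ^ ((1:ℝ)/2^j) := by
    intro j
    exact Real.one_le_rpow hw (by positivity)
  have hsqrt : ∀ j : ℕ, Real.sqrt (w ^ ((1:ℝ)/2^j)) = w ^ ((1:ℝ)/2^(j+1)) := by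
    intro j
    rw [Real.sqrt_eq_rpow, ← Real.rpow_mul hw0, pow_succ]
    ring_nf
  intro i
  induction i with
  | zero => intro h; omega
  | succ n ih =>
    intro _ hnk
    have hstepn := hstep (n+1) (by omega) hnk
    rcases Nat.eq_zero_or_pos n with hn0 | hn1
    · subst hn0
      simp only [Nat.add_sub_cancel, h0] at hstepn
      have := hstepn.2
      calc |zhat 1 - w ^ ((1:ℝ)/2^1)| = |zhat 1 - Real.sqrt w| := by
            rw [show w = w ^ ((1:ℝ)/2^0) by simp, hsqrt 0]; norm_num
        _ ≤ ε := by simpa using this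
        _ ≤ 2 * ε := by linarith
    · have ihn := ih hn1 (by omega)
      have hzn : 1 ≤ zhat n := (hstep n hn1 (by omega)).1
      have hsd : |Real.sqrt (zhat n) - Real.sqrt (w ^ ((1:ℝ)/2^n))| ≤ |zhat n - w ^ ((1:ℝ)/2^n)| / 2 :=
        sqrt_diff_half _ _ hzn (hwpow n)
      have htri : |zhat (n+1) - w ^ ((1:ℝ)/2^(n+1))| ≤
          |zhat (n+1) - Real.sqrt (zhat n)| + |Real.sqrt (zhat n) - w ^ ((1:ℝ)/2^(n+1))| := by
        exact abs_sub_le _ _ _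
      rw [← hsqrt n] at htri
      have h2 := hstepn.2
      simp only [Nat.add_sub_cancel] at h2
      rw [hsqrt n] at hsd
      rw [← hsqrt n] at hsd
      calc |zhat (n+1) - w ^ ((1:ℝ)/2^(n+1))| ≤
            |zhat (n+1) - Real.sqrt (zhat n)| + |Real.sqrt (zhat n) - Real.sqrt (w ^ ((1:ℝ)/2^n))| := by
            rw [hsqrt n] at htri ⊢; exact htri
        _ ≤ ε + |zhat n - w ^ ((1:ℝ)/2^n)| / 2 := add_le_add h2 hsd
        _ ≤ ε + (2*ε)/2 := by linarith
        _ = 2 * ε := by ring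
end

section
/- Let n ≥ m ≥ 1 be natural numbers and let w be a real number with 1 < w < 2^m, with 2^{n−m}·w ∈ ℕ (an n-bit fixed-point number with m integer bits), and such that w is not an integer power of 2. Let p be the unique positive integer with 2^{p−1} < w < 2^p (so p ≤ m), and set w_p = 2^{1−p}·w ∈ (1,2). Let ℓ be a natural number with ℓ ≥ ⌈log₂(8n)⌉ and set b = max{5ℓ, 25}. Suppose t̂_p is a real number with t̂_p ≥ 1 and |t̂_p − w_p^{1/2^ℓ}| ≤ 2·(3/4)^{b−2}·(2 + b + log₂ b); let ŷ_p = trunc_b((t̂_p − 1) − (1/2)(t̂_p − 1)²) and z_p = 2^ℓ·ŷ_p; and let r be a real number with |r − ln 2| ≤ 2^{−b}. Then |z_p + (p−1)·r − ln w| ≤ (3/4)^{5ℓ/2}·(m + 32/9 + 2·(32/9 + n/ln 2)³). -/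
open Real

lemma abs_trunc_sub_le (b : ℕ) (y : ℝ) : |trunc b y - y| ≤ ((2 : ℝ) ^ b)⁻¹ := by
  have h2 : (0 : ℝ) < 2 ^ b := by positivity
  have hfloor : |(⌊(2 : ℝ) ^ b * y⌋ : ℝ) - 2 ^ b * y| ≤ 1 := by
    rw [abs_le]
    constructor <;> linarith [Int.floor_le ((2 : ℝ) ^ b * y), Int.sub_one_lt_floor ((2 : ℝ) ^ b * y)]
  calc |trunc b y - y| = |(⌊(2 : ℝ) ^ b * y⌋ : ℝ) - 2 ^ b * y| / 2 ^ b := by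
        rw [trunc, ← abs_of_pos h2, ← abs_div, abs_of_pos h2]
        congr 1
        field_simp
    _ ≤ ((2 : ℝ) ^ b)⁻¹ := by
        rw [div_eq_mul_inv]
        exact mul_le_of_le_one_left (by positivity) hfloor

lemma rpow_one_div_sub_one_le {a N : ℝ} (ha : 1 ≤ a) (hN : 1 ≤ N) :
    a ^ (1 / N) - 1 ≤ (a - 1) / N := by
  have hroot : 1 ≤ a ^ (1 / N) := one_le_rpow ha (by positivity)
  have hpow : (a ^ (1 / N)) ^ N = a := by
    rw [← rpow_mul (by linarith), one_div_mul_cancel (by linarith), rpow_one]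
  have hbern := one_add_mul_self_le_rpow_one_add (s := a ^ (1 / N) - 1) (by linarith) hN
  rw [add_sub_cancel, hpow] at hbern
  rw [le_div_iff₀ (by linarith)]
  linarith

lemma abs_log_one_add_sub_le {δ : ℝ} (hδ : |δ| < 1) :
    |log (1 + δ) - (δ - 1 / 2 * δ ^ 2)| ≤ |δ| ^ 3 / (1 - |δ|) := by
  have h := abs_log_sub_add_sum_range_le (x := -δ) (by rwa [abs_neg]) 2
  rw [abs_neg, sub_neg_eq_add] at h
  convert h using 2
  simp only [Finset.sum_range_succ, Finset.sum_range_zero]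
  ring

lemma abs_sub_one_sub_half_sq_sub_le {s t : ℝ} (hs : 1 ≤ s) (ht : 1 ≤ t) (hst : s + t ≤ 6) :
    |((s - 1) - 1 / 2 * (s - 1) ^ 2) - ((t - 1) - 1 / 2 * (t - 1) ^ 2)| ≤ |s - t| := by
  have hfactor : |(4 - s - t) / 2| ≤ 1 := by
    rw [abs_le]; constructor <;> linarith
  calc |((s - 1) - 1 / 2 * (s - 1) ^ 2) - ((t - 1) - 1 / 2 * (t - 1) ^ 2)|
      = |s - t| * |(4 - s - t) / 2| := by rw [← abs_mul]; ring_nf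
    _ ≤ |s - t| := mul_le_of_le_one_right (abs_nonneg _) hfactor

lemma natCast_mul_pow_le {θ : ℝ} (h0 : 0 ≤ θ) (h1 : θ < 1) (k : ℕ) :
    k * θ ^ k ≤ exp (-1) / (1 - θ) := by
  have hθ : θ ^ k ≤ exp (-((1 - θ) * k)) := by
    calc θ ^ k ≤ exp (θ - 1) ^ k := pow_le_pow_left₀ h0 (by linarith [add_one_le_exp (θ - 1)]) k
      _ = exp (-((1 - θ) * k)) := by rw [← exp_nat_mul]; ring_nf
  rw [le_div_iff₀ (by linarith)]
  calc k * θ ^ k * (1 - θ) ≤ k * exp (-((1 - θ) * k)) * (1 - θ) := by gcongr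
    _ = ((1 - θ) * k) * exp (-((1 - θ) * k)) := by ring
    _ ≤ exp (-1) := mul_exp_neg_le_exp_neg_one _

lemma sq_le_two_pow {b : ℕ} (hb : 4 ≤ b) : b ^ 2 ≤ 2 ^ b := by
  induction b, hb using Nat.le_induction with
  | base => norm_num
  | succ k hk ih =>
    calc (k + 1) ^ 2 ≤ 2 * k ^ 2 := by nlinarith
      _ ≤ 2 ^ (k + 1) := by rw [pow_succ 2 k]; omega

lemma logb_two_le_half {b : ℕ} (hb : 4 ≤ b) : logb 2 b ≤ b / 2 := by
  have h : ((b : ℝ)) ^ 2 ≤ 2 ^ b := by exact_mod_cast sq_le_two_pow hb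
  have hlog := log_le_log (by positivity) h
  rw [log_pow, log_pow] at hlog
  rw [logb, div_le_iff₀ (log_pos one_lt_two)]
  push_cast at hlog
  linarith

lemma abs_mul_sub_log_le {a N s y ε η : ℝ} (ha : 1 ≤ a) (ha2 : a ≤ 2) (hN : 2 ≤ N) (hs : 1 ≤ s)
    (hε : ε ≤ 2) (hsa : |s - a ^ (1 / N)| ≤ ε) (hy : |y - ((s - 1) - 1 / 2 * (s - 1) ^ 2)| ≤ η) :
    |N * y - log a| ≤ N * (η + ε) + 2 / N ^ 2 := by
  set t := a ^ (1 / N)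
  have hN0 : 0 < N := by linarith
  have ht1 : 1 ≤ t := one_le_rpow ha (by positivity)
  have htN : t - 1 ≤ 1 / N :=
    (rpow_one_div_sub_one_le ha (by linarith)).trans (by gcongr; linarith)
  have hNinv : 1 / N ≤ 1 / 2 := by gcongr
  have hlog : log a = N * log t := by rw [log_rpow (by linarith)]; field_simp
  have htaylor : |log t - ((t - 1) - 1 / 2 * (t - 1) ^ 2)| ≤ 2 * (1 / N) ^ 3 := by
    have hδ : |t - 1| = t - 1 := abs_of_nonneg (sub_nonneg.2 ht1)
    have h := abs_log_one_add_sub_le (δ := t - 1) (by rw [hδ]; linarith)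
    rw [add_sub_cancel, hδ] at h
    refine h.trans ?_
    rw [div_le_iff₀ (by linarith)]
    have hcube : (t - 1) ^ 3 ≤ (1 / N) ^ 3 := pow_le_pow_left₀ (by linarith) htN 3
    nlinarith [pow_nonneg (sub_nonneg.2 ht1) 3]
  have hq := abs_sub_one_sub_half_sq_sub_le hs ht1 (by linarith [(abs_le.1 hsa).2])
  have hpoint : |y - log t| ≤ η + ε + 2 * (1 / N) ^ 3 := by
    have h1 := abs_sub_le y ((s - 1) - 1 / 2 * (s - 1) ^ 2) (log t)
    have h2 := abs_sub_le ((s - 1) - 1 / 2 * (s - 1) ^ 2) ((t - 1) - 1 / 2 * (t - 1) ^ 2) (log t)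
    rw [abs_sub_comm] at htaylor
    linarith
  calc |N * y - log a| = N * |y - log t| := by
        rw [hlog, ← mul_sub, abs_mul, abs_of_pos hN0]
    _ ≤ N * (η + ε + 2 * (1 / N) ^ 3) := by gcongr
    _ = N * (η + ε) + 2 / N ^ 2 := by field_simp

local notation "κ" => (3 / 4 : ℝ) ^ ((5 : ℝ) / 2)

lemma rpow_five_mul_div_two_eq_pow (ℓ : ℕ) : (3 / 4 : ℝ) ^ ((5 * (ℓ : ℝ)) / 2) = κ ^ ℓ := by
  rw [← rpow_natCast, ← rpow_mul (by norm_num)]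
  ring_nf

lemma kappa_bounds : 0.487 ≤ κ ∧ κ ≤ 0.4872 := by
  have hsq : κ ^ 2 = (3 / 4) ^ 5 := by
    rw [← rpow_natCast, ← rpow_mul (by norm_num)]
    norm_num
  have hpos : 0 ≤ κ := by positivity
  constructor <;> nlinarith

/-- The error guarantee of Algorithm PowerOf2Roots with `b` bits. -/
noncomputable def rootErr (b : ℕ) : ℝ := 2 * (3 / 4 : ℝ) ^ (b - 2) * (2 + (b : ℝ) + logb 2 b)

lemma two_pow_mul_rootErr_le {ℓ b : ℕ} (hb4 : 4 ≤ b) (hb : 5 * ℓ ≤ b) (hb' : b ≤ 5 * ℓ + 5) :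
    (2 : ℝ) ^ ℓ * rootErr b ≤ 420 * κ ^ ℓ := by
  obtain ⟨hκ0, hκ1⟩ := kappa_bounds
  have hlogb : logb 2 b ≤ b / 2 := logb_two_le_half hb4
  have hbℓ : (b : ℝ) ≤ 5 * ℓ + 5 := by exact_mod_cast hb'
  have hsub : (3 / 4 : ℝ) ^ (b - 2) = 16 / 9 * (3 / 4) ^ b := by
    rw [pow_sub₀ _ (by norm_num) (by omega)]; norm_num; ring
  have hpow : (3 / 4 : ℝ) ^ b ≤ (κ ^ 2) ^ ℓ := by
    calc (3 / 4 : ℝ) ^ b ≤ (3 / 4) ^ (5 * ℓ) := pow_le_pow_of_le_one (by norm_num) (by norm_num) hb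
      _ = (κ ^ 2) ^ ℓ := by
        rw [pow_mul, ← rpow_natCast κ, ← rpow_mul (by norm_num)]; norm_num
  -- `2κ < 1` absorbs the factor `2^ℓ`, and the linear growth in `ℓ` costs at most `e⁻¹ / (1 - 2κ)`.
  have hlin : (ℓ : ℝ) * (2 * κ) ^ ℓ ≤ 14.4 := by
    refine (natCast_mul_pow_le (by positivity) (by linarith) ℓ).trans ?_
    have hexp : exp (-1) < 0.3679 := by
      rw [exp_neg, inv_lt_comm₀ (exp_pos 1) (by norm_num)]
      linarith [exp_one_gt_d9]
    rw [div_le_iff₀ (by linarith)]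
    linarith
  have hconst : (2 * κ) ^ ℓ ≤ 1 := pow_le_one₀ (by positivity) (by linarith)
  calc (2 : ℝ) ^ ℓ * rootErr b
      = 32 / 9 * (2 + (b : ℝ) + logb 2 b) * (2 ^ ℓ * (3 / 4) ^ b) := by
        rw [rootErr, hsub]; ring
    _ ≤ 32 / 9 * (19 / 2 + 15 / 2 * ℓ) * (2 ^ ℓ * (κ ^ 2) ^ ℓ) := by
        gcongr 32 / 9 * ?_ * ?_
        · linarith
        · gcongr
    _ = 32 / 9 * (19 / 2 * (2 * κ) ^ ℓ + 15 / 2 * (ℓ * (2 * κ) ^ ℓ)) * κ ^ ℓ := by ring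
    _ ≤ 32 / 9 * (19 / 2 * 1 + 15 / 2 * 14.4) * κ ^ ℓ := by gcongr
    _ ≤ 420 * κ ^ ℓ := by gcongr; norm_num

lemma rootErr_le_two {ℓ b : ℕ} (hℓ : 4 ≤ ℓ) (hb : 5 * ℓ ≤ b) (hb' : b ≤ 5 * ℓ + 5) :
    rootErr b ≤ 2 := by
  have h := two_pow_mul_rootErr_le (by omega) hb hb'
  have h2ℓ : (2 : ℝ) ^ 4 ≤ 2 ^ ℓ := pow_le_pow_right₀ one_le_two hℓ
  have hκℓ : κ ^ ℓ ≤ 0.4872 ^ 4 :=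
    (pow_le_pow_of_le_one (by positivity) (by linarith [kappa_bounds.2]) hℓ).trans
      (pow_le_pow_left₀ (by positivity) kappa_bounds.2 4)
  by_contra! hgt
  nlinarith

lemma error_budget {ℓ b p m : ℕ} (hb4 : 4 ≤ b) (hb : 5 * ℓ ≤ b) (hb' : b ≤ 5 * ℓ + 5)
    (hp : 1 ≤ p) (hpm : p ≤ m) :
    (2 : ℝ) ^ ℓ * (((2 : ℝ) ^ b)⁻¹ + rootErr b) + 2 / ((2 : ℝ) ^ ℓ) ^ 2
      + ((p : ℝ) - 1) * ((2 : ℝ) ^ b)⁻¹ ≤ κ ^ ℓ * (m + 423) := by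
  obtain ⟨hκ0, -⟩ := kappa_bounds
  have htrunc : (2 : ℝ) ^ ℓ * ((2 : ℝ) ^ b)⁻¹ ≤ κ ^ ℓ :=
    calc (2 : ℝ) ^ ℓ * ((2 : ℝ) ^ b)⁻¹ ≤ 2 ^ ℓ * ((2 : ℝ) ^ (5 * ℓ))⁻¹ := by gcongr; norm_num
      _ = (1 / 16) ^ ℓ := by rw [pow_mul, ← inv_pow, ← mul_pow]; norm_num
      _ ≤ κ ^ ℓ := pow_le_pow_left₀ (by norm_num) (by linarith) ℓ
  have hshift : ((p : ℝ) - 1) * ((2 : ℝ) ^ b)⁻¹ ≤ m * κ ^ ℓ := by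
    have hinv : ((2 : ℝ) ^ b)⁻¹ ≤ κ ^ ℓ :=
      (le_mul_of_one_le_left (by positivity) (one_le_pow₀ one_le_two)).trans htrunc
    have : (p : ℝ) ≤ m := by exact_mod_cast hpm
    have : (1 : ℝ) ≤ p := by exact_mod_cast hp
    exact mul_le_mul (by linarith) hinv (by positivity) (by positivity)
  have hcube : 2 / ((2 : ℝ) ^ ℓ) ^ 2 ≤ 2 * κ ^ ℓ := by
    rw [← pow_mul, mul_comm, pow_mul, div_eq_mul_inv, ← inv_pow]
    gcongr
    linarith
  have hroot := two_pow_mul_rootErr_le (ℓ := ℓ) hb4 hb hb'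
  linarith

lemma two_le_of_exists_natCast_eq {n m : ℕ} (hm : 1 ≤ m) (hmn : m ≤ n) {w : ℝ} (hw1 : 1 < w)
    (hw2 : w < 2 ^ m) (hfix : ∃ K : ℕ, (2 : ℝ) ^ (n - m) * w = K) : 2 ≤ n := by
  by_contra! hn
  obtain rfl : m = 1 := by omega
  obtain rfl : n = 1 := by omega
  obtain ⟨K, hK⟩ := hfix
  rw [Nat.sub_self, pow_zero, one_mul] at hK
  rw [hK] at hw1 hw2
  norm_cast at hw1 hw2
  omega

lemma four_le_of_ceil_logb_le {n ℓ : ℕ} (hn : 2 ≤ n) (hℓ : ⌈logb 2 (8 * (n : ℝ))⌉₊ ≤ ℓ) :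
    4 ≤ ℓ := by
  have hn' : (2 : ℝ) ≤ n := by exact_mod_cast hn
  have h4 : (4 : ℝ) ≤ logb 2 (8 * n) :=
    (le_logb_iff_rpow_le one_lt_two (by positivity)).2 (by norm_num; linarith)
  have h : (4 : ℝ) ≤ ℓ := (h4.trans (Nat.le_ceil _)).trans (Nat.cast_le.2 hℓ)
  exact_mod_cast h

lemma four_hundred_twenty_three_le {n : ℕ} (hn : 2 ≤ n) :
    423 ≤ 32 / 9 + 2 * (32 / 9 + (n : ℝ) / log 2) ^ 3 := by
  have hn' : (2 : ℝ) ≤ n := by exact_mod_cast hn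
  have h : (2.8 : ℝ) ≤ n / log 2 := by
    rw [le_div_iff₀ (log_pos one_lt_two)]
    linarith [log_two_lt_d9]
  have hcube := pow_le_pow_left₀ (by norm_num) (add_le_add_left h (32 / 9)) 3
  norm_num at hcube ⊢
  linarith

lemma two_zpow_one_sub_mul_mem_Ioo {p : ℕ} (hp : 1 ≤ p) {w : ℝ} (h1 : (2 : ℝ) ^ (p - 1) < w)
    (h2 : w < 2 ^ p) : (2 : ℝ) ^ (1 - (p : ℤ)) * w ∈ Set.Ioo 1 2 := by
  have hpow : (2 : ℝ) ^ p = 2 * 2 ^ (p - 1) := by rw [← pow_succ']; congr; omega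
  have hzpow : (2 : ℝ) ^ (1 - (p : ℤ)) = ((2 : ℝ) ^ (p - 1))⁻¹ := by
    rw [← zpow_natCast, ← zpow_neg]; congr; omega
  rw [hzpow, inv_mul_eq_div, Set.mem_Ioo, one_lt_div (by positivity), div_lt_iff₀ (by positivity)]
  exact ⟨h1, by linarith⟩

lemma log_two_zpow_mul {w : ℝ} (hw : 0 < w) (p : ℕ) :
    log ((2 : ℝ) ^ (1 - (p : ℤ)) * w) = log w - ((p : ℝ) - 1) * log 2 := by
  rw [log_mul (by positivity) hw.ne', log_zpow]
  push_cast
  ring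

theorem stmt3_general (n m : ℕ) (hm : 1 ≤ m) (hmn : m ≤ n)
    (w : ℝ) (hw1 : 1 < w) (hw2 : w < 2^m)
    (hfix : ∃ K : ℕ, (2:ℝ)^(n-m) * w = K)
    (p : ℕ) (hp : 1 ≤ p) (hp1 : (2:ℝ)^(p-1) < w) (hp2 : w < 2^p)
    (ℓ : ℕ) (hℓ : ⌈Real.logb 2 (8*(n:ℝ))⌉₊ ≤ ℓ)
    (b : ℕ) (hb : b = max (5*ℓ) 25)
    (thatp : ℝ) (hthat1 : 1 ≤ thatp)
    (hthat2 : |thatp - ((2:ℝ)^((1 - (p:ℤ))) * w) ^ ((1:ℝ)/2^ℓ)| ≤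
      2 * (3/4 : ℝ)^(b-2) * (2 + (b:ℝ) + Real.logb 2 b))
    (yhatp : ℝ) (hyhat : yhatp = trunc b ((thatp - 1) - (1/2) * (thatp - 1)^2))
    (r : ℝ) (hr : |r - Real.log 2| ≤ (2:ℝ)^(-(b:ℤ))) :
    |(2:ℝ)^ℓ * yhatp + ((p:ℝ) - 1) * r - Real.log w| ≤
      (3/4 : ℝ) ^ ((5*(ℓ:ℝ))/2) * ((m:ℝ) + 32/9 + 2 * (32/9 + (n:ℝ) / Real.log 2)^3) := by
  have hn := two_le_of_exists_natCast_eq hm hmn hw1 hw2 hfix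
  have hℓ4 := four_le_of_ceil_logb_le hn hℓ
  have hpm : p ≤ m := by
    have : p - 1 < m := (pow_lt_pow_iff_right₀ (a := (2 : ℝ)) one_lt_two).1 (hp1.trans hw2)
    omega
  obtain ⟨hwp1, hwp2⟩ := two_zpow_one_sub_mul_mem_Ioo hp hp1 hp2
  have hroot := abs_mul_sub_log_le hwp1.le hwp2.le (le_self_pow₀ one_le_two (by omega))
    hthat1 (rootErr_le_two hℓ4 (by omega) (by omega)) hthat2 (hyhat ▸ abs_trunc_sub_le _ _)
  rw [log_two_zpow_mul (by linarith) p] at hroot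
  rw [zpow_neg, zpow_natCast] at hr
  rw [rpow_five_mul_div_two_eq_pow]
  calc |(2:ℝ)^ℓ * yhatp + ((p:ℝ) - 1) * r - log w|
      = |((2:ℝ)^ℓ * yhatp - (log w - ((p:ℝ) - 1) * log 2)) + ((p:ℝ) - 1) * (r - log 2)| := by
        ring_nf
    _ ≤ ((2:ℝ)^ℓ * (((2:ℝ)^b)⁻¹ + rootErr b) + 2 / ((2:ℝ)^ℓ)^2) + ((p:ℝ) - 1) * ((2:ℝ)^b)⁻¹ := by
        have hp' : (0 : ℝ) ≤ p - 1 := by simpa using hp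
        refine (abs_add_le _ _).trans (add_le_add hroot ?_)
        rw [abs_mul, abs_of_nonneg hp']
        gcongr
    _ ≤ κ ^ ℓ * ((m:ℝ) + 423) := error_budget (by omega) (by omega) (by omega) hp hpm
    _ ≤ κ ^ ℓ * ((m:ℝ) + 32/9 + 2 * (32/9 + (n:ℝ) / log 2)^3) :=
        mul_le_mul_of_nonneg_left (by linarith [four_hundred_twenty_three_le hn]) (by positivity)

/-- Error analysis of Algorithm LN: approximating `ln w` by shifting `w` into `[1,2)`,
taking the `2^ℓ`-th root, approximating `ln(1+δ)` by `δ − δ²/2`, rescaling by `2^ℓ`,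
and adding `(p−1)·r` where `r` approximates `ln 2`. -/
theorem stmt3 (n m : ℕ) (hm : 1 ≤ m) (hmn : m ≤ n)
    (w : ℝ) (hw1 : 1 < w) (hw2 : w < 2^m)
    (hfix : ∃ K : ℕ, (2:ℝ)^(n-m) * w = K)
    (hnotpow : ∀ j : ℤ, w ≠ (2:ℝ)^j)
    (p : ℕ) (hp : 1 ≤ p) (hp1 : (2:ℝ)^(p-1) < w) (hp2 : w < 2^p)
    (ℓ : ℕ) (hℓ : ⌈Real.logb 2 (8*(n:ℝ))⌉₊ ≤ ℓ)
    (b : ℕ) (hb : b = max (5*ℓ) 25)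
    (thatp : ℝ) (hthat1 : 1 ≤ thatp)
    (hthat2 : |thatp - ((2:ℝ)^((1 - (p:ℤ))) * w) ^ ((1:ℝ)/2^ℓ)| ≤
      2 * (3/4 : ℝ)^(b-2) * (2 + (b:ℝ) + Real.logb 2 b))
    (yhatp : ℝ) (hyhat : yhatp = trunc b ((thatp - 1) - (1/2) * (thatp - 1)^2))
    (r : ℝ) (hr : |r - Real.log 2| ≤ (2:ℝ)^(-(b:ℤ))) :
    |(2:ℝ)^ℓ * yhatp + ((p:ℝ) - 1) * r - Real.log w| ≤
      (3/4 : ℝ) ^ ((5*(ℓ:ℝ))/2) * ((m:ℝ) + 32/9 + 2 * (32/9 + (n:ℝ) / Real.log 2)^3) :=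
  stmt3_general n m hm hmn w hw1 hw2 hfix p hp hp1 hp2 ℓ hℓ b hb thatp hthat1 hthat2 yhatp hyhat r
    hr
end

section
/- Let H₁,…,H_m be N×N complex Hermitian matrices, let 1 ≤ m' < m, set A = ∑_{j=1}^{m'} H_j, B = ∑_{j=m'+1}^{m} H_j and H = A + B, and let t ∈ ℝ. Then for any fixed positive integers α and β, the matrices [ (e^{−iH₁t/(αn)} ⋯ e^{−iH_{m'}t/(αn)})^α · (e^{−iH_{m'+1}t/(βn)} ⋯ e^{−iH_m t/(βn)})^β ]^n converge to e^{−iHt} as n → ∞ over the natural numbers. -/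
/-!
If `F(0) = 1` and `F'(0) = S` in a Banach algebra, then `F(1/n)^n → exp S`: both `F(1/n)` and
`exp(S/n)` are `1 + S/n + o(1/n)`, and the telescoping bound
`‖aⁿ - bⁿ‖ ≤ n (1 + K/n)ⁿ⁻¹ ‖a - b‖ ≤ n eᴷ ‖a - b‖` turns this `o(1/n)` discrepancy into an `o(1)`
one between the `n`-th powers, while `exp(S/n)ⁿ = exp S`. The recursed Trotter product is
`F(1/n)ⁿ` for `F(s) = (∏ⱼ exp(s Aⱼ))^α (∏ₖ exp(s Bₖ))^β`, whose derivative at `0` is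
`α ∑ⱼ Aⱼ + β ∑ₖ Bₖ`; with `Aⱼ = -itHⱼ/α` and `Bₖ = -itHₖ/β` this is `-itH`.
-/

open Filter Topology NormedSpace

theorem one_add_div_pow_le_exp {K : ℝ} (hK : 0 ≤ K) (n : ℕ) : (1 + K / n) ^ n ≤ Real.exp K := by
  calc (1 + K / n) ^ n ≤ Real.exp (K / n) ^ n := by
        gcongr
        linarith [Real.add_one_le_exp (K / n)]
    _ = Real.exp (n * (K / n)) := (Real.exp_nat_mul _ _).symm
    _ ≤ Real.exp K := by
        gcongr
        rcases n.eq_zero_or_pos with rfl | hn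
        · simpa using hK
        · rw [mul_div_cancel₀ _ (by positivity)]

theorem norm_pow_sub_pow_le_of_norm_le {𝔸 : Type*} [NormedRing 𝔸] [NormOneClass 𝔸] {a b : 𝔸}
    {c : ℝ} (ha : ‖a‖ ≤ c) (hb : ‖b‖ ≤ c) (n : ℕ) :
    ‖a ^ n - b ^ n‖ ≤ n * c ^ (n - 1) * ‖a - b‖ := by
  induction n with
  | zero => simp
  | succ n ih =>
    have hc : 0 ≤ c := (norm_nonneg a).trans ha
    have hpow : ‖a ^ n‖ ≤ c ^ n :=
      (norm_pow_le a n).trans (pow_le_pow_left₀ (norm_nonneg a) ha n)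
    have hc_pow : n * c ^ (n - 1) * c = n * c ^ n := by
      cases n with
      | zero => simp
      | succ n => rw [Nat.add_sub_cancel, pow_succ]; ring
    calc ‖a ^ (n + 1) - b ^ (n + 1)‖ = ‖a ^ n * (a - b) + (a ^ n - b ^ n) * b‖ := by
          congr 1; noncomm_ring
      _ ≤ ‖a ^ n‖ * ‖a - b‖ + ‖a ^ n - b ^ n‖ * ‖b‖ :=
          (norm_add_le _ _).trans (add_le_add (norm_mul_le _ _) (norm_mul_le _ _))
      _ ≤ c ^ n * ‖a - b‖ + n * c ^ (n - 1) * ‖a - b‖ * c := by gcongr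
      _ = (n + 1 : ℕ) * c ^ (n + 1 - 1) * ‖a - b‖ := by
          rw [mul_right_comm, hc_pow, Nat.add_sub_cancel]; push_cast; ring

theorem HasDerivAt.fun_pow_of_eq_one {𝕜 𝔸 : Type*} [NontriviallyNormedField 𝕜] [NormedRing 𝔸]
    [NormedAlgebra 𝕜 𝔸] {F : 𝕜 → 𝔸} {F' : 𝔸} {x : 𝕜} (hF : HasDerivAt F F' x) (h1 : F x = 1)
    (k : ℕ) : HasDerivAt (fun s => F s ^ k) (k • F') x := by
  simpa [h1] using hF.fun_pow' k

section BanachAlgebra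

variable {𝕂 𝔸 : Type*} [RCLike 𝕂] [NormedRing 𝔸] [NormedAlgebra 𝕂 𝔸]

theorem tendsto_pow_sub_pow_of_tendsto_natCast_smul_sub_one [NormOneClass 𝔸] {a b : ℕ → 𝔸}
    {S : 𝔸} (ha : Tendsto (fun n : ℕ => (n : 𝕂) • (a n - 1)) atTop (𝓝 S))
    (hb : Tendsto (fun n : ℕ => (n : 𝕂) • (b n - 1)) atTop (𝓝 S)) :
    Tendsto (fun n => a n ^ n - b n ^ n) atTop (𝓝 0) := by
  set K := ‖S‖ + 1
  have hK : 0 ≤ K := by positivity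
  have norm_le : ∀ c : ℕ → 𝔸, Tendsto (fun n : ℕ => (n : 𝕂) • (c n - 1)) atTop (𝓝 S) →
      ∀ᶠ n in atTop, ‖c n‖ ≤ 1 + K / n := by
    intro c hc
    filter_upwards [hc.norm.eventually (eventually_le_nhds (lt_add_one ‖S‖)),
      eventually_ne_atTop 0] with n hn hn0
    calc ‖c n‖ ≤ ‖(1 : 𝔸)‖ + ‖c n - 1‖ := norm_le_insert' _ _
      _ = 1 + ‖(n : 𝕂) • (c n - 1)‖ / n := by
          rw [norm_one, norm_smul, RCLike.norm_natCast, mul_div_cancel_left₀ _ (by positivity)]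
      _ ≤ 1 + K / n := by gcongr
  have hdiff : Tendsto (fun n : ℕ => (n : 𝕂) • (a n - 1) - (n : 𝕂) • (b n - 1)) atTop (𝓝 0) := by
    simpa using ha.sub hb
  refine squeeze_zero_norm' ?_ (by simpa using hdiff.norm.const_mul (Real.exp K))
  filter_upwards [norm_le a ha, norm_le b hb] with n han hbn
  calc ‖a n ^ n - b n ^ n‖ ≤ n * (1 + K / n) ^ (n - 1) * ‖a n - b n‖ :=
        norm_pow_sub_pow_le_of_norm_le han hbn n
    _ ≤ n * Real.exp K * ‖a n - b n‖ := by
        gcongr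
        calc (1 + K / n) ^ (n - 1) ≤ (1 + K / n) ^ n :=
              pow_le_pow_right₀ (by simpa using by positivity) (Nat.sub_le n 1)
          _ ≤ Real.exp K := one_add_div_pow_le_exp hK n
    _ = Real.exp K * ‖(n : 𝕂) • (a n - 1) - (n : 𝕂) • (b n - 1)‖ := by
        rw [← smul_sub, sub_sub_sub_cancel_right, norm_smul, RCLike.norm_natCast]; ring

theorem tendsto_natCast_smul_sub_one_of_hasDerivAt {F : 𝕂 → 𝔸} {S : 𝔸} (h0 : F 0 = 1)
    (hF : HasDerivAt F S 0) :
    Tendsto (fun n : ℕ => (n : 𝕂) • (F (n : 𝕂)⁻¹ - 1)) atTop (𝓝 S) := by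
  have hinv : Tendsto (fun n : ℕ => (n : 𝕂)⁻¹) atTop (𝓝[≠] 0) :=
    tendsto_nhdsWithin_iff.mpr ⟨tendsto_inv_atTop_nhds_zero_nat,
      (eventually_ne_atTop 0).mono fun n hn => by simpa using hn⟩
  simpa [h0, Function.comp_def] using (hasDerivAt_iff_tendsto_slope_zero.mp hF).comp hinv

variable [CompleteSpace 𝔸]

theorem tendsto_pow_inv_natCast_of_hasDerivAt [NormOneClass 𝔸] {F : 𝕂 → 𝔸} {S : 𝔸}
    (h0 : F 0 = 1) (hF : HasDerivAt F S 0) :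
    Tendsto (fun n : ℕ => F (n : 𝕂)⁻¹ ^ n) atTop (𝓝 (exp S)) := by
  let E : 𝕂 → 𝔸 := fun s => exp (s • S)
  have hE : HasDerivAt E S 0 := by simpa [E] using hasDerivAt_exp_smul_const S (0 : 𝕂)
  have hE_pow : ∀ᶠ n : ℕ in atTop, E (n : 𝕂)⁻¹ ^ n = exp S := by
    let : NormedAlgebra ℚ 𝔸 := NormedAlgebra.restrictScalars ℚ 𝕂 𝔸
    filter_upwards [eventually_ne_atTop 0] with n hn
    rw [← exp_nsmul, ← Nat.cast_smul_eq_nsmul 𝕂, smul_smul, mul_inv_cancel₀ (by simpa using hn),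
      one_smul]
  have hdiff := tendsto_pow_sub_pow_of_tendsto_natCast_smul_sub_one
    (tendsto_natCast_smul_sub_one_of_hasDerivAt h0 hF)
    (tendsto_natCast_smul_sub_one_of_hasDerivAt (by simp [E]) hE)
  refine (hdiff.add_const (exp S)).congr' ?_ |>.trans (by rw [zero_add])
  filter_upwards [hE_pow] with n hn
  rw [hn, sub_add_cancel]

theorem hasDerivAt_list_prod_exp_smul (l : List 𝔸) :
    HasDerivAt (fun s : 𝕂 => (l.map fun x => exp (s • x)).prod) l.sum 0 := by
  induction l with
  | nil => simpa using hasDerivAt_const (0 : 𝕂) (1 : 𝔸)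
  | cons a l ih => simpa using (hasDerivAt_exp_smul_const a (0 : 𝕂)).fun_mul ih

theorem tendsto_prod_exp_pow_mul_prod_exp_pow [NormOneClass 𝔸] (l₁ l₂ : List 𝔸) (α β : ℕ) :
    Tendsto (fun n : ℕ => ((l₁.map fun x => exp ((n : 𝕂)⁻¹ • x)).prod ^ α *
      (l₂.map fun x => exp ((n : 𝕂)⁻¹ • x)).prod ^ β) ^ n) atTop
      (𝓝 (exp (α • l₁.sum + β • l₂.sum))) := by
  have hF := ((hasDerivAt_list_prod_exp_smul (𝕂 := 𝕂) l₁).fun_pow_of_eq_one (by simp) α).fun_mul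
    ((hasDerivAt_list_prod_exp_smul (𝕂 := 𝕂) l₂).fun_pow_of_eq_one (by simp) β)
  have h := tendsto_pow_inv_natCast_of_hasDerivAt (by simp)
    (hF.congr_deriv (by simp : _ = α • l₁.sum + β • l₂.sum))
  exact h

end BanachAlgebra

theorem sum_range_add_sum_range_sub_eq_sum_Icc {M : Type*} [AddCommMonoid M] (f : ℕ → M)
    {m m' : ℕ} (h : m' ≤ m) :
    ∑ j ∈ Finset.range m', f (j + 1) + ∑ j ∈ Finset.range (m - m'), f (m' + j + 1) =
      ∑ j ∈ Finset.Icc 1 m, f j := by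
  rw [← Finset.Ico_add_one_right_eq_Icc, ← Finset.sum_Ico_consecutive f (by omega : 1 ≤ m' + 1)
    (by omega : m' + 1 ≤ m + 1), Finset.sum_Ico_eq_sum_range, Finset.sum_Ico_eq_sum_range]
  simp only [add_tsub_cancel_right, Nat.add_sub_add_right, add_comm 1, add_right_comm m']

theorem nsmul_div_smul_cancel {𝕜 M : Type*} [Field 𝕜] [CharZero 𝕜] [AddCommGroup M] [Module 𝕜 M]
    {γ : ℕ} (hγ : γ ≠ 0) (c : 𝕜) (x : M) : γ • (c / γ) • x = c • x := by
  rw [← Nat.cast_smul_eq_nsmul 𝕜, smul_smul, mul_div_cancel₀ _ (Nat.cast_ne_zero.mpr hγ)]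

theorem stmt8_general (N : ℕ) (m m' : ℕ) (hm' : m' < m)
    (H : ℕ → Matrix (Fin N) (Fin N) ℂ)
    (t : ℝ) (α β : ℕ) (hα : 0 < α) (hβ : 0 < β) :
    Filter.Tendsto
      (fun n : ℕ =>
        ( (((List.range m').map (fun j =>
              NormedSpace.exp (((-(Complex.I * (t:ℂ))) / ((α:ℂ) * (n:ℂ))) • H (j+1)))).prod) ^ α
          *
          (((List.range (m - m')).map (fun j =>
              NormedSpace.exp (((-(Complex.I * (t:ℂ))) / ((β:ℂ) * (n:ℂ))) • H (m' + j + 1)))).prod) ^ β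
        ) ^ n)
      Filter.atTop
      (nhds (NormedSpace.exp ((-(Complex.I * (t:ℂ))) • (∑ j ∈ Finset.Icc 1 m, H j)))) := by
  -- the operator norm satisfies `‖1‖ = 1` only on a nonzero algebra
  rcases isEmpty_or_nonempty (Fin N) with hN | hN
  · exact tendsto_const_nhds.congr fun _ => Subsingleton.elim _ _
  let : NormedRing (Matrix (Fin N) (Fin N) ℂ) := Matrix.linftyOpNormedRing
  let : NormedAlgebra ℂ (Matrix (Fin N) (Fin N) ℂ) := Matrix.linftyOpNormedAlgebra
  set c := -(Complex.I * (t : ℂ))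
  have hsmul : ∀ (γ n : ℕ) (x : Matrix (Fin N) (Fin N) ℂ),
      (c / (γ * n)) • x = (n : ℂ)⁻¹ • (c / γ) • x := by
    intro γ n x; rw [smul_smul]; ring_nf
  have hsum : α • ((List.range m').map fun j => (c / α) • H (j + 1)).sum +
      β • ((List.range (m - m')).map fun j => (c / β) • H (m' + j + 1)).sum =
      c • ∑ j ∈ Finset.Icc 1 m, H j := by
    calc _ = α • (c / α) • ∑ j ∈ Finset.range m', H (j + 1) +
          β • (c / β) • ∑ j ∈ Finset.range (m - m'), H (m' + j + 1) := by
          rw [Finset.smul_sum (r := c / α), Finset.smul_sum (r := c / β)]; rfl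
      _ = c • ∑ j ∈ Finset.Icc 1 m, H j := by
          rw [nsmul_div_smul_cancel hα.ne', nsmul_div_smul_cancel hβ.ne', ← smul_add,
            sum_range_add_sum_range_sub_eq_sum_Icc H hm'.le]
  have h := tendsto_prod_exp_pow_mul_prod_exp_pow (𝕂 := ℂ)
    ((List.range m').map fun j => (c / α) • H (j + 1))
    ((List.range (m - m')).map fun j => (c / β) • H (m' + j + 1)) α β
  simp only [List.map_map, Function.comp_def, ← hsmul, hsum] at h
  exact h

/-- The recursed Lie–Trotter product formula: splitting `H = A + B` with
`A = H₁ + ⋯ + H_{m'}` and `B = H_{m'+1} + ⋯ + H_m`, and applying inner repetition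
numbers `α` and `β` within the two groups, the iterated product still converges to
`exp(−iHt)` as `n → ∞`. -/
theorem stmt8 (N : ℕ) (m m' : ℕ) (hm'1 : 1 ≤ m') (hm' : m' < m)
    (H : ℕ → Matrix (Fin N) (Fin N) ℂ)
    (hHerm : ∀ j ∈ Finset.Icc 1 m, (H j).IsHermitian)
    (t : ℝ) (α β : ℕ) (hα : 0 < α) (hβ : 0 < β) :
    Filter.Tendsto
      (fun n : ℕ =>
        ( (((List.range m').map (fun j =>
              NormedSpace.exp (((-(Complex.I * (t:ℂ))) / ((α:ℂ) * (n:ℂ))) • H (j+1)))).prod) ^ α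
          *
          (((List.range (m - m')).map (fun j =>
              NormedSpace.exp (((-(Complex.I * (t:ℂ))) / ((β:ℂ) * (n:ℂ))) • H (m' + j + 1)))).prod) ^ β
        ) ^ n)
      Filter.atTop
      (nhds (NormedSpace.exp ((-(Complex.I * (t:ℂ))) • (∑ j ∈ Finset.Icc 1 m, H j)))) :=
  stmt8_general N m m' hm' H t α β hα hβ
end

section
/- Let A and B be N×N complex Hermitian matrices, set H = A + B, let n ≥ 1 be a natural number, t > 0, Δt = t/n, and let ‖·‖ denote the spectral norm. Then ‖e^{−iHt} − (e^{−iAΔt/2}·e^{−iBΔt}·e^{−iAΔt/2})^n‖ ≤ (1/12)·(‖[[A,B],A]‖ + ‖[[A,B],B]‖)·t·Δt² ≤ (2/3)·‖A‖·‖B‖·max{‖A‖,‖B‖}·t·Δt², where [X,Y] = XY − YX denotes the matrix commutator. -/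
/-!
Put `X = -iAΔt/2` and `Y = -iBΔt`. These are skew-adjoint, so every exponential in sight is
unitary and the error of `n` steps is at most `n` times the one-step error
`‖exp (X + Y + X) - exp X * exp Y * exp X‖` (telescoping).

For one step, `S s = exp (sX) exp (sY) exp (sX)` solves `S' = G s * S` with
`G s = X + Ad_{exp sX} (Y + Ad_{exp sY} X)`, so by Duhamel's principle the one-step error is at most
`∫₀¹ ‖G s - (X + Y + X)‖ ds`. Next,
`G s - (X + Y + X) = ∫₀ˢ (Ad_{exp uX} [X, Y] - Ad_{exp sX} Ad_{exp uY} [X, Y]) du`, and since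
conjugation by `exp (uZ)` moves `W` at speed `‖[Z, W]‖`, the integrand has norm at most
`(s - u) ‖[X,[X,Y]]‖ + u ‖[Y,[X,Y]]‖`. Integrating twice gives the factor `1/6`.
-/

open scoped Matrix.Norms.L2Operator

open NormedSpace

theorem norm_sub_le_sub_of_norm_deriv_le_deriv {E : Type*} [NormedAddCommGroup E]
    [NormedSpace ℝ E] {f f' : ℝ → E} {g g' : ℝ → ℝ} {a b : ℝ} (hab : a ≤ b)
    (hf : ∀ x, HasDerivAt f (f' x) x) (hg : ∀ x, HasDerivAt g (g' x) x)
    (bound : ∀ x ∈ Set.Ico a b, ‖f' x‖ ≤ g' x) : ‖f b - f a‖ ≤ g b - g a :=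
  image_norm_le_of_norm_deriv_right_le_deriv_boundary (f := fun x => f x - f a)
    (B := fun x => g x - g a) (fun x _ => ((hf x).sub_const (f a)).continuousAt.continuousWithinAt)
    (fun x _ => ((hf x).sub_const (f a)).hasDerivWithinAt) (by simp)
    (fun x => (hg x).sub_const (g a)) bound ⟨hab, le_rfl⟩

section CStarRing

variable {E : Type*} [NormedRing E] [StarRing E] [CStarRing E]

theorem norm_pow_sub_pow_le_of_mem_unitary {a b : E} (ha : a ∈ unitary E) (hb : b ∈ unitary E) :
    ∀ n : ℕ, ‖a ^ n - b ^ n‖ ≤ n * ‖a - b‖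
  | 0 => by simp
  | n + 1 => by
    have telescope : a ^ (n + 1) - b ^ (n + 1) = a ^ n * (a - b) + (a ^ n - b ^ n) * b := by
      rw [pow_succ, pow_succ]; noncomm_ring
    calc ‖a ^ (n + 1) - b ^ (n + 1)‖ ≤ ‖a ^ n * (a - b)‖ + ‖(a ^ n - b ^ n) * b‖ :=
          telescope ▸ norm_add_le _ _
      _ = ‖a - b‖ + ‖a ^ n - b ^ n‖ := by
          rw [CStarRing.norm_mem_unitary_mul _ (pow_mem ha n), CStarRing.norm_mul_mem_unitary _ hb]
      _ ≤ (n + 1 : ℕ) * ‖a - b‖ := by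
          push_cast; linarith [norm_pow_sub_pow_le_of_mem_unitary ha hb n]

end CStarRing

section BanachAlgebra

variable {𝔸 : Type*} [NormedRing 𝔸] [NormedAlgebra ℝ 𝔸]

-- The algebraic lemmas about `exp` are stated for normed `ℚ`-algebras.
noncomputable local instance : NormedAlgebra ℚ 𝔸 := .restrictScalars ℚ ℝ 𝔸

noncomputable def expConj (X Z : 𝔸) (s : ℝ) : 𝔸 := exp (s • X) * Z * exp (-(s • X))

theorem expConj_zero (X Z : 𝔸) : expConj X Z 0 = Z := by simp [expConj]

variable [CompleteSpace 𝔸]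

theorem exp_neg_mul_exp_mul (x w : 𝔸) : exp (-x) * (exp x * w) = w := by
  rw [← mul_assoc, ← exp_add_of_commute (Commute.refl x).neg_left, neg_add_cancel, exp_zero,
    one_mul]

theorem expConj_self (X : 𝔸) (s : ℝ) : expConj X X s = X := by
  rw [expConj, ((Commute.refl X).smul_left s).exp_left.eq, mul_assoc,
    ← exp_add_of_commute (Commute.refl _).neg_right, add_neg_cancel, exp_zero, mul_one]

theorem hasDerivAt_expConj (X Z : 𝔸) (s : ℝ) :
    HasDerivAt (expConj X Z) (expConj X ⁅X, Z⁆ s) s := by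
  have hneg : HasDerivAt (fun s : ℝ => exp (-(s • X))) (-X * exp (-(s • X))) s := by
    simpa only [smul_neg] using hasDerivAt_exp_smul_const' (-X) s
  refine (((hasDerivAt_exp_smul_const X s).mul_const Z).mul hneg).congr_deriv ?_
  simp only [expConj, Ring.lie_def]
  noncomm_ring

noncomputable def strangStep (X Y : 𝔸) (s : ℝ) : 𝔸 := exp (s • X) * exp (s • Y) * exp (s • X)

noncomputable def strangGenerator (X Y : 𝔸) (s : ℝ) : 𝔸 := X + expConj X (Y + expConj Y X s) s

theorem hasDerivAt_strangStep (X Y : 𝔸) (s : ℝ) :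
    HasDerivAt (strangStep X Y) (strangGenerator X Y s * strangStep X Y s) s := by
  refine (((hasDerivAt_exp_smul_const' X s).mul (hasDerivAt_exp_smul_const' Y s)).mul
    (hasDerivAt_exp_smul_const' X s)).congr_deriv ?_
  simp only [strangStep, strangGenerator, expConj, Pi.mul_apply, add_mul, mul_add, mul_assoc,
    add_assoc, exp_neg_mul_exp_mul]

variable [StarRing 𝔸] [CStarRing 𝔸] [StarModule ℝ 𝔸]

theorem exp_smul_mem_unitary {X : 𝔸} (hX : X ∈ skewAdjoint 𝔸) (s : ℝ) :
    exp (s • X) ∈ unitary 𝔸 :=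
  exp_mem_unitary_of_mem_skewAdjoint (skewAdjoint.smul_mem s hX)

theorem strangStep_mem_unitary {X Y : 𝔸} (hX : X ∈ skewAdjoint 𝔸) (hY : Y ∈ skewAdjoint 𝔸)
    (s : ℝ) : strangStep X Y s ∈ unitary 𝔸 :=
  mul_mem (mul_mem (exp_smul_mem_unitary hX s) (exp_smul_mem_unitary hY s))
    (exp_smul_mem_unitary hX s)

theorem norm_expConj {X : 𝔸} (hX : X ∈ skewAdjoint 𝔸) (Z : 𝔸) (s : ℝ) :
    ‖expConj X Z s‖ = ‖Z‖ := by
  rw [expConj, ← smul_neg, CStarRing.norm_mul_mem_unitary _ (exp_smul_mem_unitary (neg_mem hX) s),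
    CStarRing.norm_mem_unitary_mul _ (exp_smul_mem_unitary hX s)]

theorem norm_expConj_sub_expConj_le {X : 𝔸} (hX : X ∈ skewAdjoint 𝔸) (Z : 𝔸) (s t : ℝ) :
    ‖expConj X Z t - expConj X Z s‖ ≤ ‖⁅X, Z⁆‖ * |t - s| :=
  convex_univ.norm_image_sub_le_of_norm_hasDerivWithin_le
    (fun u _ => (hasDerivAt_expConj X Z u).hasDerivWithinAt)
    (fun u _ => (norm_expConj hX _ u).le) trivial trivial

theorem norm_strangGenerator_sub_le {X Y : 𝔸} (hX : X ∈ skewAdjoint 𝔸) (hY : Y ∈ skewAdjoint 𝔸)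
    {s : ℝ} (hs : 0 ≤ s) :
    ‖strangGenerator X Y s - (X + Y + X)‖ ≤ s ^ 2 / 2 * (‖⁅X, ⁅X, Y⁆⁆‖ + ‖⁅Y, ⁅X, Y⁆⁆‖) := by
  set C := ⁅X, Y⁆
  set G : ℝ → 𝔸 := fun u => expConj X Y u + expConj X (expConj Y X u) s
  have hG : ∀ u, HasDerivAt G (expConj X C u - expConj X (expConj Y C u) s) u := by
    intro u
    refine ((hasDerivAt_expConj X Y u).add
      (((hasDerivAt_expConj Y X u).const_mul _).mul_const _)).congr_deriv ?_
    have hskew : ⁅Y, X⁆ = -C := by simp only [C, Ring.lie_def, neg_sub]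
    simp only [expConj, hskew, mul_neg, neg_mul, sub_eq_add_neg]
    rfl
  have hg : ∀ u, HasDerivAt (fun u => ‖⁅X, C⁆‖ * (s * u - u ^ 2 / 2) + ‖⁅Y, C⁆‖ * (u ^ 2 / 2))
      (‖⁅X, C⁆‖ * (s - u) + ‖⁅Y, C⁆‖ * u) u := by
    intro u
    refine ((((hasDerivAt_id u).const_mul s).sub ((hasDerivAt_pow 2 u).div_const 2)).const_mul
      ‖⁅X, C⁆‖ |>.add (((hasDerivAt_pow 2 u).div_const 2).const_mul ‖⁅Y, C⁆‖)).congr_deriv ?_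
    norm_num
  have bound : ∀ u ∈ Set.Ico 0 s, ‖expConj X C u - expConj X (expConj Y C u) s‖ ≤
      ‖⁅X, C⁆‖ * (s - u) + ‖⁅Y, C⁆‖ * u := by
    rintro u ⟨hu0, hus⟩
    have hsplit : expConj X C s - expConj X (expConj Y C u) s =
        expConj X (expConj Y C 0 - expConj Y C u) s := by
      rw [expConj_zero]
      simp only [expConj, sub_mul, mul_sub]
    calc ‖expConj X C u - expConj X (expConj Y C u) s‖
        ≤ ‖expConj X C u - expConj X C s‖ + ‖expConj X C s - expConj X (expConj Y C u) s‖ :=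
          norm_sub_le_norm_sub_add_norm_sub _ _ _
      _ = ‖expConj X C s - expConj X C u‖ + ‖expConj Y C u - expConj Y C 0‖ := by
          rw [hsplit, norm_expConj hX, norm_sub_rev, norm_sub_rev (expConj Y C 0)]
      _ ≤ ‖⁅X, C⁆‖ * |s - u| + ‖⁅Y, C⁆‖ * |u - 0| :=
          add_le_add (norm_expConj_sub_expConj_le hX C u s) (norm_expConj_sub_expConj_le hY C 0 u)
      _ = ‖⁅X, C⁆‖ * (s - u) + ‖⁅Y, C⁆‖ * u := by
          rw [abs_of_nonneg (by linarith), sub_zero, abs_of_nonneg hu0]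
  have hG0 : G 0 = Y + X := by simp only [G, expConj_zero, expConj_self]
  have hGs : G s = expConj X (Y + expConj Y X s) s := by simp only [G, expConj, mul_add, add_mul]
  calc ‖strangGenerator X Y s - (X + Y + X)‖ = ‖G s - G 0‖ := by
        rw [hGs, hG0, strangGenerator]; congr 1; abel
    _ ≤ _ := norm_sub_le_sub_of_norm_deriv_le_deriv hs hG hg bound
    _ = _ := by ring

theorem norm_exp_sub_strang_le {X Y : 𝔸} (hX : X ∈ skewAdjoint 𝔸) (hY : Y ∈ skewAdjoint 𝔸) :
    ‖exp (X + Y + X) - exp X * exp Y * exp X‖ ≤ (‖⁅X, ⁅X, Y⁆⁆‖ + ‖⁅Y, ⁅X, Y⁆⁆‖) / 6 := by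
  set L := X + Y + X
  have hL : L ∈ skewAdjoint 𝔸 := add_mem (add_mem hX hY) hX
  set K := ‖⁅X, ⁅X, Y⁆⁆‖ + ‖⁅Y, ⁅X, Y⁆⁆‖
  -- Duhamel's principle: `F` runs from `exp L` at `s = 0` to the Strang step at `s = 1`.
  set F : ℝ → 𝔸 := fun s => exp ((1 - s) • L) * strangStep X Y s
  have hF : ∀ s, HasDerivAt F
      (exp ((1 - s) • L) * ((strangGenerator X Y s - L) * strangStep X Y s)) s := by
    intro s
    refine (((hasDerivAt_exp_smul_const L (1 - s)).comp_const_sub 1 s).mul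
      (hasDerivAt_strangStep X Y s)).congr_deriv ?_
    noncomm_ring
  have hg : ∀ s, HasDerivAt (fun s => s ^ 3 / 6 * K) (s ^ 2 / 2 * K) s := by
    intro s
    refine (((hasDerivAt_pow 3 s).div_const 6).mul_const K).congr_deriv ?_
    ring
  have bound : ∀ s ∈ Set.Ico 0 1,
      ‖exp ((1 - s) • L) * ((strangGenerator X Y s - L) * strangStep X Y s)‖ ≤ s ^ 2 / 2 * K := by
    rintro s ⟨hs, -⟩
    rw [CStarRing.norm_mem_unitary_mul _ (exp_smul_mem_unitary hL _),
      CStarRing.norm_mul_mem_unitary _ (strangStep_mem_unitary hX hY s)]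
    exact norm_strangGenerator_sub_le hX hY hs
  have := norm_sub_le_sub_of_norm_deriv_le_deriv zero_le_one hF hg bound
  norm_num [F, strangStep] at this
  rw [norm_sub_rev]
  linarith

theorem norm_exp_nsmul_sub_strang_pow_le {X Y : 𝔸} (hX : X ∈ skewAdjoint 𝔸)
    (hY : Y ∈ skewAdjoint 𝔸) (n : ℕ) :
    ‖exp (n • (X + Y + X)) - (exp X * exp Y * exp X) ^ n‖ ≤
      n * ((‖⁅X, ⁅X, Y⁆⁆‖ + ‖⁅Y, ⁅X, Y⁆⁆‖) / 6) := by
  have hunit {Z : 𝔸} (hZ : Z ∈ skewAdjoint 𝔸) := exp_mem_unitary_of_mem_skewAdjoint hZ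
  rw [exp_nsmul]
  exact (norm_pow_sub_pow_le_of_mem_unitary (hunit (add_mem (add_mem hX hY) hX))
    (mul_mem (mul_mem (hunit hX) (hunit hY)) (hunit hX)) n).trans
    (mul_le_mul_of_nonneg_left (norm_exp_sub_strang_le hX hY) n.cast_nonneg)

end BanachAlgebra

theorem norm_lie_le {R : Type*} [NormedRing R] (a b : R) : ‖⁅a, b⁆‖ ≤ 2 * ‖a‖ * ‖b‖ := by
  rw [Ring.lie_def]
  linarith [norm_sub_le (a * b) (b * a), norm_mul_le a b, norm_mul_le b a, mul_comm ‖a‖ ‖b‖]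

theorem norm_lie_lie_le {R : Type*} [NormedRing R] (a b c : R) :
    ‖⁅a, ⁅b, c⁆⁆‖ ≤ 4 * ‖a‖ * ‖b‖ * ‖c‖ :=
  calc ‖⁅a, ⁅b, c⁆⁆‖ ≤ 2 * ‖a‖ * ‖⁅b, c⁆‖ := norm_lie_le a _
    _ ≤ 2 * ‖a‖ * (2 * ‖b‖ * ‖c‖) := by gcongr; exact norm_lie_le b c
    _ = 4 * ‖a‖ * ‖b‖ * ‖c‖ := by ring

theorem norm_lie_lie_add_norm_lie_lie_le {R : Type*} [NormedRing R] (a b : R) :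
    ‖⁅a, ⁅a, b⁆⁆‖ + ‖⁅b, ⁅a, b⁆⁆‖ ≤ 8 * ‖a‖ * ‖b‖ * max ‖a‖ ‖b‖ :=
  calc ‖⁅a, ⁅a, b⁆⁆‖ + ‖⁅b, ⁅a, b⁆⁆‖ ≤ 4 * ‖a‖ * ‖a‖ * ‖b‖ + 4 * ‖b‖ * ‖a‖ * ‖b‖ :=
        add_le_add (norm_lie_lie_le a a b) (norm_lie_lie_le b a b)
    _ = 4 * ‖a‖ * ‖b‖ * (‖a‖ + ‖b‖) := by ring
    _ ≤ 4 * ‖a‖ * ‖b‖ * (2 * max ‖a‖ ‖b‖) := by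
        gcongr; linarith [le_max_left ‖a‖ ‖b‖, le_max_right ‖a‖ ‖b‖]
    _ = 8 * ‖a‖ * ‖b‖ * max ‖a‖ ‖b‖ := by ring

theorem smul_lie_smul {R A : Type*} [CommRing R] [Ring A] [Algebra R A] (c d : R) (a b : A) :
    ⁅c • a, d • b⁆ = (c * d) • ⁅a, b⁆ := by
  simp only [Ring.lie_def, smul_mul_smul_comm, mul_comm d c, smul_sub]

section ComplexCStarAlgebra

open Complex

variable {𝔸 : Type*} [NormedRing 𝔸] [NormedAlgebra ℂ 𝔸] [CompleteSpace 𝔸] [StarRing 𝔸]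
  [CStarRing 𝔸] [StarModule ℂ 𝔸]

theorem norm_exp_sub_strang_pow_le_of_isSelfAdjoint {A B : 𝔸} (hA : IsSelfAdjoint A)
    (hB : IsSelfAdjoint B) {n : ℕ} (hn : n ≠ 0) {t : ℝ} (ht : 0 ≤ t) :
    ‖exp ((-(I * (t : ℂ))) • (A + B)) -
        (exp ((-(I * ((t / n / 2 : ℝ) : ℂ))) • A) * exp ((-(I * ((t / n : ℝ) : ℂ))) • B) *
          exp ((-(I * ((t / n / 2 : ℝ) : ℂ))) • A)) ^ n‖ ≤
      t * (t / n) ^ 2 * (‖⁅A, ⁅A, B⁆⁆‖ / 24 + ‖⁅B, ⁅A, B⁆⁆‖ / 12) := by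
  set Δ := t / n with hΔ
  have hΔ0 : 0 ≤ Δ := by positivity
  have hnΔ : (n : ℝ) * Δ = t := by rw [hΔ]; field_simp
  have skew {r : ℝ} {M : 𝔸} (hM : IsSelfAdjoint M) : (-(I * (r : ℂ))) • M ∈ skewAdjoint 𝔸 :=
    hM.smul_mem_skewAdjoint (by simp [skewAdjoint.mem_iff])
  have hnorm {r : ℝ} (hr : 0 ≤ r) : ‖-(I * (r : ℂ))‖ = r := by simp [abs_of_nonneg hr]
  have hsplit : (-(I * (t : ℂ))) • (A + B) =
      n • ((-(I * ((Δ / 2 : ℝ) : ℂ))) • A + (-(I * (Δ : ℂ))) • B +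
        (-(I * ((Δ / 2 : ℝ) : ℂ))) • A) := by
    rw [← Nat.cast_smul_eq_nsmul ℂ, ← hnΔ]; push_cast; module
  have herror := norm_exp_nsmul_sub_strang_pow_le (skew (r := Δ / 2) hA) (skew (r := Δ) hB) n
  simp only [smul_lie_smul, norm_smul, norm_mul, hnorm hΔ0, hnorm (by positivity : 0 ≤ Δ / 2)]
    at herror
  rw [hsplit]
  refine herror.trans (le_of_eq ?_)
  rw [← hnΔ]
  ring

end ComplexCStarAlgebra

/-- Error bound for the repeated Strang (second-order symmetric Trotter) splitting formula
`S₂(A,B,Δt) = e^{−iAΔt/2}·e^{−iBΔt}·e^{−iAΔt/2}` over `n` time slices `Δt = t/n`,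
for simulating `e^{−iHt}` with `H = A + B`.  `‖·‖` is the spectral norm. -/
theorem stmt9 (N : ℕ) (A B : Matrix (Fin N) (Fin N) ℂ)
    (hA : A.IsHermitian) (hB : B.IsHermitian)
    (n : ℕ) (hn : 1 ≤ n) (t : ℝ) (ht : 0 < t) :
    ‖NormedSpace.exp ((-(Complex.I * (t:ℂ))) • (A + B)) -
        (NormedSpace.exp ((-(Complex.I * ((t/n/2 : ℝ) : ℂ))) • A) *
         NormedSpace.exp ((-(Complex.I * ((t/n : ℝ) : ℂ))) • B) *
         NormedSpace.exp ((-(Complex.I * ((t/n/2 : ℝ) : ℂ))) • A)) ^ n‖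
      ≤ (1/12) * (‖(A*B - B*A)*A - A*(A*B - B*A)‖ + ‖(A*B - B*A)*B - B*(A*B - B*A)‖)
          * t * (t/n)^2 ∧
    (1/12) * (‖(A*B - B*A)*A - A*(A*B - B*A)‖ + ‖(A*B - B*A)*B - B*(A*B - B*A)‖)
        * t * (t/n)^2
      ≤ (2/3) * ‖A‖ * ‖B‖ * max ‖A‖ ‖B‖ * t * (t/n)^2 := by
  have hCA : ‖(A*B - B*A)*A - A*(A*B - B*A)‖ = ‖⁅A, ⁅A, B⁆⁆‖ := by rw [norm_sub_rev]; rfl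
  have hCB : ‖(A*B - B*A)*B - B*(A*B - B*A)‖ = ‖⁅B, ⁅A, B⁆⁆‖ := by rw [norm_sub_rev]; rfl
  rw [hCA, hCB]
  have htΔ : 0 ≤ t * (t / n) ^ 2 := by positivity
  refine ⟨(norm_exp_sub_strang_pow_le_of_isSelfAdjoint hA.isSelfAdjoint hB.isSelfAdjoint
    (by omega) ht.le).trans ?_, ?_⟩
  · nlinarith [norm_nonneg ⁅A, ⁅A, B⁆⁆]
  · calc 1 / 12 * (‖⁅A, ⁅A, B⁆⁆‖ + ‖⁅B, ⁅A, B⁆⁆‖) * t * (t / n) ^ 2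
        ≤ 1 / 12 * (8 * ‖A‖ * ‖B‖ * max ‖A‖ ‖B‖) * t * (t / n) ^ 2 := by
          gcongr; exact norm_lie_lie_add_norm_lie_lie_le A B
      _ = 2 / 3 * ‖A‖ * ‖B‖ * max ‖A‖ ‖B‖ * t * (t / n) ^ 2 := by ring
end
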